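/- If ε_l := ε · (L √(m_l) (1 + C_{l-1}) Π_{k=l+1}^{L}(B_k + ε/L))^{-1}, where C_{l-1} ≥ sup_x ‖x^{(l-1)}‖₁ and B_k ≥ ‖W^{(k)}‖_∞, and the layerwise errors satisfy e_l ≤ ε_l √(m_l)(1 + C_{l-1}) + (B_l + ε/L) e_{l-1} with e_0 = 0 and ε_l ≤ ε/L, then e_L ≤ ε. -/
import Mathlib


open Finset in
/-- With the layerwise tolerances
`ε_l = ε / (L √(m_l) (1 + C_{l-1}) ∏_{k=l+1}^L (B_k + ε/L))`, if the layerwise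
errors satisfy `e_l ≤ ε_l √(m_l) (1 + C_{l-1}) + (B_l + ε/L) e_{l-1}` with
`e_0 = 0` (and each `ε_l ≤ ε/L`), then `e_L ≤ ε`. -/
theorem layerwise_tolerance_error_bound (L : ℕ) (hL : 1 ≤ L) (ε : ℝ) (hε : 0 < ε)
    (m C B e εl : ℕ → ℝ)
    (hm : ∀ l, 0 < m l) (hC : ∀ l, 0 ≤ C l) (hB : ∀ l, 0 ≤ B l)
    (hεl : ∀ l, 1 ≤ l → l ≤ L →
      εl l = ε / ((L : ℝ) * Real.sqrt (m l) * (1 + C (l - 1))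
        * ∏ k ∈ Finset.Icc (l + 1) L, (B k + ε / L)))
    (hεlsmall : ∀ l, 1 ≤ l → l ≤ L → εl l ≤ ε / L)
    (he0 : e 0 = 0)
    (hrec : ∀ l, 1 ≤ l → l ≤ L →
      e l ≤ εl l * Real.sqrt (m l) * (1 + C (l - 1)) + (B l + ε / L) * e (l - 1)) :
    e L ≤ ε := by
  have hLpos : (0:ℝ) < L := by exact_mod_cast hL
  set P : ℕ → ℝ := fun l => ∏ k ∈ Finset.Icc (l + 1) L, (B k + ε / L) with hP
  have hPpos : ∀ l, 0 < P l := fun l =>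
    Finset.prod_pos (fun k _ => by have := hB k; positivity)
  have key : ∀ l, l ≤ L → e l ≤ l * ε / (L * P l) := by
    intro l
    induction l with
    | zero => intro _; simp [he0]
    | succ n ih =>
      intro hle
      have h1 : 1 ≤ n + 1 := Nat.succ_le_succ (Nat.zero_le n)
      have hrec' := hrec (n + 1) h1 hle
      have hεl' := hεl (n + 1) h1 hle
      simp only [Nat.add_sub_cancel] at hrec' hεl'
      have hsqrt : 0 < Real.sqrt (m (n + 1)) := Real.sqrt_pos.mpr (hm _)
      have hCn : 0 < 1 + C n := by linarith [hC n]
      have hPn1 := hPpos (n + 1)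
      have hprodP : (∏ k ∈ Finset.Icc (n + 1 + 1) L, (B k + ε / L)) = P (n + 1) := rfl
      rw [hprodP] at hεl'
      have hLne : (L:ℝ) ≠ 0 := hLpos.ne'
      have hPne : P (n + 1) ≠ 0 := hPn1.ne'
      have hsne : Real.sqrt (m (n + 1)) ≠ 0 := hsqrt.ne'
      have hCne : (1 + C n) ≠ 0 := hCn.ne'
      have hterm : εl (n + 1) * Real.sqrt (m (n + 1)) * (1 + C n)
          = ε / (L * P (n + 1)) := by
        rw [hεl']
        field_simp
      have hBpos : 0 < B (n + 1) + ε / L := by have := hB (n + 1); positivity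
      have hBne : B (n + 1) + ε / L ≠ 0 := hBpos.ne'
      have hPrel : P n = (B (n + 1) + ε / L) * P (n + 1) := by
        have hins : Finset.Icc (n + 1) L = insert (n + 1) (Finset.Icc (n + 2) L) := by
          ext k
          simp only [Finset.mem_Icc, Finset.mem_insert]
          omega
        have hnotmem : (n + 1) ∉ Finset.Icc (n + 2) L := by
          simp only [Finset.mem_Icc]; omega
        simp only [hP, hins, Finset.prod_insert hnotmem]
      have hen : e n ≤ n * ε / (L * P n) := ih (le_of_lt hle)
      have h2 : (B (n + 1) + ε / L) * e n ≤ n * ε / (L * P (n + 1)) := by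
        calc (B (n + 1) + ε / L) * e n ≤ (B (n + 1) + ε / L) * (n * ε / (L * P n)) :=
              mul_le_mul_of_nonneg_left hen (le_of_lt hBpos)
          _ = n * ε / (L * P (n + 1)) := by
              rw [hPrel, ← mul_div_assoc,
                show (L:ℝ) * ((B (n + 1) + ε / L) * P (n + 1))
                  = (B (n + 1) + ε / L) * ((L:ℝ) * P (n + 1)) from by ring,
                mul_div_mul_left _ _ hBne]
      calc e (n + 1) ≤ ε / (L * P (n + 1)) + n * ε / (L * P (n + 1)) := by
            rw [← hterm]; linarith
        _ = (n + 1 : ℕ) * ε / (L * P (n + 1)) := by push_cast; ring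
  have hPL : P L = 1 := by
    simp [hP, Finset.Icc_eq_empty_of_lt (Nat.lt_succ_self L)]
  have := key L le_rfl
  rw [hPL, mul_one] at this
  calc e L ≤ L * ε / L := this
    _ = ε := by field_simp
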